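/- arXiv:2504.20790 — 2 statements merged into one kernel-verified Lean document; each statement's English description precedes it below -/
import Mathlib

section
/- Necessary and sufficient condition for charge feasibility without the battery cap: if ρ_0 + Σ_{j<k} c_j - Σ_{j≤k} e_j ≤ ρ_max for all k (the cap is never binding), then the rotation is charge-feasible (ρ_k ≥ ρ_min for all k) if and only if ρ_0 + Σ_{j<k} c_j - Σ_{j≤k} e_j ≥ ρ_min for every k = 1,…,n. -/
/-- Necessary and sufficient condition for charge feasibility when the battery cap is never
binding: if the pre-discharge level `ρ_0 + Σ_{j<k+1} c_j - Σ_{j<k} e_j` never exceeds `ρ_max`,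
then the rotation is charge-feasible (`ρ_k ≥ ρ_min` for all `k = 0,…,n`) iff
`ρ_0 + Σ_{j<k} c_j - Σ_{j<k} e_j ≥ ρ_min` for every `k = 1,…,n`. -/
theorem charge_feasibility_iff_prefix_sums (ρmin ρmax : ℝ) (hρ : ρmin ≤ ρmax) (n : ℕ)
    (c e : ℕ → ℝ) (hc : ∀ k, 0 ≤ c k) (he : ∀ k, 0 ≤ e k)
    (ρ : ℕ → ℝ)
    (hrec : ∀ k < n, ρ (k + 1) = min ρmax (ρ k + c k) - e k)
    (h0max : ρ 0 ≤ ρmax) (h0min : ρmin ≤ ρ 0)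
    (hcap : ∀ k < n,
      ρ 0 + ∑ j ∈ Finset.range (k + 1), c j - ∑ j ∈ Finset.range k, e j ≤ ρmax) :
    (∀ k ≤ n, ρmin ≤ ρ k) ↔
      (∀ k, 1 ≤ k → k ≤ n →
        ρmin ≤ ρ 0 + ∑ j ∈ Finset.range k, c j - ∑ j ∈ Finset.range k, e j) := by
  have key : ∀ k ≤ n, ρ k = ρ 0 + ∑ j ∈ Finset.range k, c j - ∑ j ∈ Finset.range k, e j := by
    intro k hk
    induction k with
    | zero => simp
    | succ k ih =>
      have hkn : k < n := Nat.lt_of_succ_le hk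
      have ihk := ih (le_of_lt hkn)
      have hmin : min ρmax (ρ k + c k) = ρ k + c k := by
        apply min_eq_right
        have := hcap k hkn
        rw [Finset.sum_range_succ] at this
        linarith [ihk]
      rw [hrec k hkn, hmin, ihk, Finset.sum_range_succ, Finset.sum_range_succ]
      ring
  constructor
  · intro h k hk1 hkn
    have := h k hkn
    rwa [key k hkn] at this
  · intro h k hkn
    rcases Nat.eq_zero_or_pos k with rfl | hk
    · exact h0min
    · rw [key k hkn]
      exact h k hk hkn
end

section
/- Benders' termination certificate: if (x*, ζ*) is optimal for the restricted main problem with valid cuts and ζ*^ω ≥ Q_ω(x*) for every scenario ω, then x* is optimal for the full two-stage problem and the restricted main problem's optimal value equals the full optimal value. -/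
/-- Benders' termination certificate: if `(x*, ζ*)` is optimal for the restricted main
problem with valid cuts and `ζ*^ω ≥ Q_ω(x*)` for every scenario `ω`, then `x*` is optimal
for the full two-stage problem and the restricted main problem's optimal value equals the
full optimal value. -/
theorem benders_termination_certificate
    {E Ω : Type*} [Fintype Ω] [AddCommGroup E] [Module ℝ E]
    (X : Set E) (f : E → ℝ) (Q : Ω → E → ℝ)
    (p : Ω → ℝ) (hp : ∀ ω, 0 ≤ p ω)
    (cuts : Ω → Finset ((E →ₗ[ℝ] ℝ) × ℝ))
    (hvalid : ∀ ω, ∀ cut ∈ cuts ω, ∀ x ∈ X, cut.1 x + cut.2 ≤ Q ω x)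
    (xstar : E) (ζstar : Ω → ℝ)
    (hfeas : xstar ∈ X ∧ ∀ ω, ∀ cut ∈ cuts ω, cut.1 xstar + cut.2 ≤ ζstar ω)
    (hopt : ∀ (x : E) (ζ : Ω → ℝ),
      x ∈ X → (∀ ω, ∀ cut ∈ cuts ω, cut.1 x + cut.2 ≤ ζ ω) →
      f xstar + ∑ ω, p ω * ζstar ω ≤ f x + ∑ ω, p ω * ζ ω)
    (hcert : ∀ ω, Q ω xstar ≤ ζstar ω) :
    (∀ x ∈ X, f xstar + ∑ ω, p ω * Q ω xstar ≤ f x + ∑ ω, p ω * Q ω x) ∧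
      f xstar + ∑ ω, p ω * ζstar ω = f xstar + ∑ ω, p ω * Q ω xstar := by
  have hle : f xstar + ∑ ω, p ω * ζstar ω ≤ f xstar + ∑ ω, p ω * Q ω xstar :=
    hopt xstar (fun ω => Q ω xstar) hfeas.1
      (fun ω cut hcut => hvalid ω cut hcut xstar hfeas.1)
  have hge : f xstar + ∑ ω, p ω * Q ω xstar ≤ f xstar + ∑ ω, p ω * ζstar ω := by
    gcongr with ω _
    · exact hp ω
    · exact hcert ω
  have heq := le_antisymm hle hge
  refine ⟨fun x hx => ?_, heq⟩
  calc f xstar + ∑ ω, p ω * Q ω xstar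
      = f xstar + ∑ ω, p ω * ζstar ω := heq.symm
    _ ≤ f x + ∑ ω, p ω * Q ω x :=
      hopt x (fun ω => Q ω x) hx (fun ω cut hcut => hvalid ω cut hcut x hx)
end
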